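/- arXiv:2109.04010 — 3 statements merged into one kernel-verified Lean document; each statement's English description precedes it below -/
import Mathlib

section
/- Let λ^{(11)}, λ^{(12)} ∈ R^{n_1} and λ^{(21)}, λ^{(22)} ∈ R^{n_2}. Define the block matrix X = [[λ^{(11)}, λ^{(12)}, 0, 0], [0, 0, λ^{(21)}, λ^{(22)}]] ∈ R^{(n_1+n_2)×4} (columns as indicated) and the 4×4 orthogonal matrix U with rows (1,0,0,0), (0,0,1/√2,1/√2), (0,0,1/√2,−1/√2), (0,1,0,0). Then X U I_{3,1} U^⊤ X^⊤ equals the block matrix [[λ^{(11)}(λ^{(11)})^⊤, λ^{(12)}(λ^{(21)})^⊤], [λ^{(21)}(λ^{(12)})^⊤, λ^{(22)}(λ^{(22)})^⊤]]. -/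
/-!
`U I₃,₁ Uᵀ` is the permutation matrix exchanging the second and third coordinates, so the
`(r, s)` entry of `X U I₃,₁ Uᵀ Xᵀ` is `x_{r1} x_{s1} + x_{r2} x_{s3} + x_{r3} x_{s2} + x_{r4} x_{s4}`.
The block zero pattern of `X` leaves exactly one product of `λ`'s in each block.
-/

open Matrix

theorem Matrix.mul_permMatrix_mul_transpose_apply {m n R : Type*} [Fintype n] [DecidableEq n]
    [CommSemiring R] (A B : Matrix m n R) (σ : Equiv.Perm n) (r s : m) :
    (A * σ.permMatrix R * Bᵀ) r s = ∑ k, A r (σ.symm k) * B s k := by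
  rw [Equiv.Perm.permMatrix, PEquiv.mul_toMatrix_toPEquiv, mul_apply]
  rfl

-- On the span of `e₂, e₃` the matrix is a rotation by `π/4`, which conjugates `diag(1, -1)`
-- into the swap `[[0, 1], [1, 0]]`.
theorem rotation_mul_signature_mul_transpose_eq_permMatrix_swap :
    !![1, 0, 0, 0;
       0, 0, 1 / Real.sqrt 2, 1 / Real.sqrt 2;
       0, 0, 1 / Real.sqrt 2, -(1 / Real.sqrt 2);
       0, 1, 0, 0] * diagonal ![1, 1, 1, -1] *
    !![1, 0, 0, 0;
       0, 0, 1 / Real.sqrt 2, 1 / Real.sqrt 2;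
       0, 0, 1 / Real.sqrt 2, -(1 / Real.sqrt 2);
       0, 1, 0, 0]ᵀ = (Equiv.swap (1 : Fin 4) 2).permMatrix ℝ := by
  have h : (√2)⁻¹ * (√2)⁻¹ = (2⁻¹ : ℝ) := by rw [← mul_inv, Real.mul_self_sqrt zero_le_two]
  ext i j
  fin_cases i <;> fin_cases j <;>
    simp [mul_apply, Fin.sum_univ_four, vecMul_diagonal, PEquiv.toMatrix_apply,
      Equiv.swap_apply_def, h, ← two_mul]

theorem stmt_2 (n₁ n₂ : ℕ)
    (lam11 lam12 : Fin n₁ → ℝ) (lam21 lam22 : Fin n₂ → ℝ)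
    (X : Matrix (Fin n₁ ⊕ Fin n₂) (Fin 4) ℝ)
    (hX : ∀ r c, X r c = Sum.elim
      (fun i => ![lam11 i, lam12 i, 0, 0] c)
      (fun i => ![0, 0, lam21 i, lam22 i] c) r)
    (U : Matrix (Fin 4) (Fin 4) ℝ)
    (hU : U = !![1, 0, 0, 0;
                 0, 0, 1 / Real.sqrt 2, 1 / Real.sqrt 2;
                 0, 0, 1 / Real.sqrt 2, -(1 / Real.sqrt 2);
                 0, 1, 0, 0])
    (I31 : Matrix (Fin 4) (Fin 4) ℝ)
    (hI : I31 = Matrix.diagonal ![1, 1, 1, -1]) :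
    X * U * I31 * Uᵀ * Xᵀ = Matrix.fromBlocks
      (Matrix.of fun i j => lam11 i * lam11 j)
      (Matrix.of fun i j => lam12 i * lam21 j)
      (Matrix.of fun i j => lam21 i * lam12 j)
      (Matrix.of fun i j => lam22 i * lam22 j) := by
  have hswap : X * U * I31 * Uᵀ = X * (Equiv.swap (1 : Fin 4) 2).permMatrix ℝ := by
    rw [hU, hI, Matrix.mul_assoc, Matrix.mul_assoc, ← Matrix.mul_assoc _ _ (Matrix.transpose _),
      rotation_mul_signature_mul_transpose_eq_permMatrix_swap]
  rw [hswap]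
  ext (i | i) (j | j) <;>
    simp [mul_permMatrix_mul_transpose_apply, Fin.sum_univ_four, Equiv.swap_apply_def, hX]
end

section
/- Every PABM edge probability matrix is a GRDPG edge probability matrix with signature (K(K+1)/2, K(K−1)/2): if P is n×n with blocks P^{(kℓ)} = λ^{(kℓ)}(λ^{(ℓk)})^⊤ for vectors λ^{(kℓ)} ∈ R^{n_k}, then there exist a block-diagonal matrix X ∈ R^{n×K²} and an orthogonal matrix U ∈ R^{K²×K²} (depending only on K) such that P = (XU) I_{p,q} (XU)^⊤ with p = K(K+1)/2, q = K(K−1)/2. -/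
/-
With `S` the permutation matrix of the swap `(a, b) ↦ (b, a)` of `Fin K × Fin K`, one has
`P = X S Xᵀ` for the block-diagonal `X` with `X ⟨k, i⟩ (k, ℓ) = λ^{(kℓ)}_i`. The matrix `S` is a
symmetric involution, so the spectral theorem gives `S = U D Uᵀ` with `U` orthogonal and `D` a
diagonal of signs; since `trace S = K` (the fixed points of the swap), `D` has `K(K+1)/2` entries
`1` and `K(K-1)/2` entries `-1`.
-/

open Matrix Finset

section Signs

variable {ι : Type*} [Fintype ι] {d : ι → ℝ}

lemma two_mul_card_filter_eq_one (hd : ∀ i, d i = 1 ∨ d i = -1) :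
    2 * (#{i | d i = 1} : ℝ) = Fintype.card ι + ∑ i, d i := by
  have (i : ι) : 2 * (if d i = 1 then (1 : ℝ) else 0) = 1 + d i := by
    rcases hd i with h | h <;> norm_num [h]
  simp only [← Finset.sum_boole, Finset.mul_sum, this, Finset.sum_add_distrib, Finset.sum_const,
    Finset.card_univ, nsmul_one]

lemma two_mul_card_filter_eq_neg_one (hd : ∀ i, d i = 1 ∨ d i = -1) :
    2 * (#{i | d i = -1} : ℝ) = Fintype.card ι - ∑ i, d i := by
  have (i : ι) : 2 * (if d i = -1 then (1 : ℝ) else 0) = 1 - d i := by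
    rcases hd i with h | h <;> norm_num [h]
  simp only [← Finset.sum_boole, Finset.mul_sum, this, Finset.sum_sub_distrib, Finset.sum_const,
    Finset.card_univ, nsmul_one]

end Signs

section Spectral

variable {ι : Type*} [Fintype ι] [DecidableEq ι]

theorem Matrix.IsSymm.exists_orthogonal_diagonal {A : Matrix ι ι ℝ} (hA : A.IsSymm) :
    ∃ (U : Matrix ι ι ℝ) (d : ι → ℝ), U * Uᵀ = 1 ∧ ∑ i, d i = A.trace ∧
      A = U * diagonal d * Uᵀ := by
  have hH : A.IsHermitian := by
    rwa [IsHermitian, conjTranspose_eq_transpose_of_trivial]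
  refine ⟨hH.eigenvectorUnitary, hH.eigenvalues, ?_, by simp [hH.trace_eq_sum_eigenvalues], ?_⟩
  · simpa [star_eq_conjTranspose] using Unitary.coe_mul_star_self hH.eigenvectorUnitary
  · simpa [star_eq_conjTranspose] using hH.spectral_theorem

lemma eq_one_or_eq_neg_one_of_conj_diagonal_mul_self_eq_one {U : Matrix ι ι ℝ} {d : ι → ℝ}
    (hU : U * Uᵀ = 1) (h : U * diagonal d * Uᵀ * (U * diagonal d * Uᵀ) = 1) (i : ι) :
    d i = 1 ∨ d i = -1 := by
  have hUtU : Uᵀ * U = 1 := mul_eq_one_comm.mp hU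
  have hd2 : diagonal d * diagonal d = 1 := by
    calc diagonal d * diagonal d
        = Uᵀ * (U * diagonal d * Uᵀ * (U * diagonal d * Uᵀ)) * U := by
          simp only [← Matrix.mul_assoc, hUtU, Matrix.one_mul]
          simp only [Matrix.mul_assoc, hUtU, Matrix.mul_one]
      _ = 1 := by rw [h, Matrix.mul_one, hUtU]
  have := congr_fun (congr_fun hd2 i) i
  rw [diagonal_mul_diagonal, diagonal_apply_eq, one_apply_eq] at this
  exact mul_self_eq_one_iff.mp this

end Spectral

section SwapMatrix

variable (α R : Type*) [Fintype α] [DecidableEq α]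

abbrev swapMatrix [Zero R] [One R] : Matrix (α × α) (α × α) R :=
  Equiv.Perm.permMatrix R (Equiv.prodComm α α)

variable {α R}

omit [Fintype α] in
lemma swapMatrix_isSymm [Zero R] [One R] : (swapMatrix α R).IsSymm := by
  simp [IsSymm, Equiv.Perm.inv_def, Equiv.prodComm_symm]

lemma swapMatrix_mul_self [NonAssocSemiring R] : swapMatrix α R * swapMatrix α R = 1 := by
  rw [← permMatrix_mul]; convert permMatrix_one; ext <;> rfl

lemma trace_swapMatrix [AddCommMonoidWithOne R] : (swapMatrix α R).trace = Fintype.card α := by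
  have (a b : α) : swapMatrix α R (a, b) (a, b) = if a = b then 1 else 0 := by
    simp [Equiv.toPEquiv_apply, eq_comm]
  rw [trace, Fintype.sum_prod_type]
  simp only [diag_apply, this, Finset.sum_ite_eq, Finset.mem_univ, if_true, Finset.sum_const,
    Finset.card_univ, nsmul_one]

lemma mul_swapMatrix_apply [NonAssocSemiring R] {m : Type*} (M : Matrix m (α × α) R) (i c) :
    (M * swapMatrix α R) i c = M i c.swap := by
  simp [PEquiv.mul_toMatrix_toPEquiv]

end SwapMatrix

section PABM

variable {κ R : Type*} [Fintype κ] [DecidableEq κ] [CommSemiring R] {β : κ → Type*}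

def pabmLatent (lam : (k : κ) → κ → β k → R) : Matrix ((k : κ) × β k) (κ × κ) R :=
  of fun r c => if c.1 = r.1 then lam r.1 c.2 r.2 else 0

omit [Fintype κ] in
lemma pabmLatent_apply_of_ne (lam : (k : κ) → κ → β k → R) {k : κ} (i : β k) {c : κ × κ}
    (hc : c.1 ≠ k) : pabmLatent lam ⟨k, i⟩ c = 0 :=
  if_neg hc

lemma pabmLatent_mul_swapMatrix_mul_transpose (lam : (k : κ) → κ → β k → R) :
    pabmLatent lam * swapMatrix κ R * (pabmLatent lam)ᵀ =
      of fun r s => lam r.1 s.1 r.2 * lam s.1 r.1 s.2 := by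
  ext ⟨k, i⟩ ⟨ℓ, j⟩
  rw [Matrix.mul_apply, Fintype.sum_prod_type]
  simp [mul_swapMatrix_apply, pabmLatent, ite_mul, mul_ite]

end PABM

theorem stmt_8_general (K : ℕ) (n : Fin K → ℕ)
    (lam : (k : Fin K) → Fin K → (Fin (n k) → ℝ))
    (P : Matrix ((k : Fin K) × Fin (n k)) ((k : Fin K) × Fin (n k)) ℝ)
    (hP : ∀ (k ℓ : Fin K) (i : Fin (n k)) (j : Fin (n ℓ)),
      P ⟨k, i⟩ ⟨ℓ, j⟩ = lam k ℓ i * lam ℓ k j) :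
    ∃ (X : Matrix ((k : Fin K) × Fin (n k)) (Fin K × Fin K) ℝ)
      (U : Matrix (Fin K × Fin K) (Fin K × Fin K) ℝ)
      (d : Fin K × Fin K → ℝ),
      (∀ (k : Fin K) (i : Fin (n k)) (c : Fin K × Fin K), c.1 ≠ k → X ⟨k, i⟩ c = 0) ∧
      U * Uᵀ = 1 ∧
      (∀ c, d c = 1 ∨ d c = -1) ∧
      (Finset.univ.filter fun c : Fin K × Fin K => d c = 1).card = K * (K + 1) / 2 ∧
      (Finset.univ.filter fun c : Fin K × Fin K => d c = -1).card = K * (K - 1) / 2 ∧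
      P = (X * U) * Matrix.diagonal d * (X * U)ᵀ := by
  obtain ⟨U, d, hU, htrace, hS⟩ :=
    (swapMatrix_isSymm (α := Fin K) (R := ℝ)).exists_orthogonal_diagonal
  have hd := eq_one_or_eq_neg_one_of_conj_diagonal_mul_self_eq_one hU (hS ▸ swapMatrix_mul_self)
  have hpos := two_mul_card_filter_eq_one hd
  have hneg := two_mul_card_filter_eq_neg_one hd
  rw [htrace, trace_swapMatrix, Fintype.card_prod, Fintype.card_fin] at hpos hneg
  have hP' : P = pabmLatent lam * swapMatrix (Fin K) ℝ * (pabmLatent lam)ᵀ := by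
    rw [pabmLatent_mul_swapMatrix_mul_transpose]
    ext ⟨k, i⟩ ⟨ℓ, j⟩
    exact hP k ℓ i j
  refine ⟨pabmLatent lam, U, d, fun k i c => pabmLatent_apply_of_ne lam i, hU, hd, ?_, ?_, ?_⟩
  · have : 2 * #{c | d c = 1} = K * K + K := by exact_mod_cast hpos
    rw [Nat.mul_succ]; omega
  · have : 2 * #{c | d c = -1} + K = K * K := by exact_mod_cast eq_sub_iff_add_eq.mp hneg
    rw [Nat.mul_sub_one]; omega
  · rw [hP', hS]
    simp only [transpose_mul, Matrix.mul_assoc]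

theorem stmt_8 (K : ℕ) (hK : 1 ≤ K) (n : Fin K → ℕ)
    (lam : (k : Fin K) → Fin K → (Fin (n k) → ℝ))
    (P : Matrix ((k : Fin K) × Fin (n k)) ((k : Fin K) × Fin (n k)) ℝ)
    (hP : ∀ (k ℓ : Fin K) (i : Fin (n k)) (j : Fin (n ℓ)),
      P ⟨k, i⟩ ⟨ℓ, j⟩ = lam k ℓ i * lam ℓ k j) :
    ∃ (X : Matrix ((k : Fin K) × Fin (n k)) (Fin K × Fin K) ℝ)
      (U : Matrix (Fin K × Fin K) (Fin K × Fin K) ℝ)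
      (d : Fin K × Fin K → ℝ),
      (∀ (k : Fin K) (i : Fin (n k)) (c : Fin K × Fin K), c.1 ≠ k → X ⟨k, i⟩ c = 0) ∧
      U * Uᵀ = 1 ∧
      (∀ c, d c = 1 ∨ d c = -1) ∧
      (Finset.univ.filter fun c : Fin K × Fin K => d c = 1).card = K * (K + 1) / 2 ∧
      (Finset.univ.filter fun c : Fin K × Fin K => d c = -1).card = K * (K - 1) / 2 ∧
      P = (X * U) * Matrix.diagonal d * (X * U)ᵀ :=
  stmt_8_general K n lam P hP
end

section
/- Let Y and Ỹ be n×d real matrices of full column rank d with Y I_{p,q} Y^⊤ = Ỹ I_{p,q} Ỹ^⊤ (where p+q=d). Then Q = I_{p,q} Ỹ^⊤ Y (Y^⊤ Y)^{−1} I_{p,q} satisfies Y = Ỹ Q and Q^⊤ I_{p,q} Q = I_{p,q}, i.e., Q lies in the indefinite orthogonal group O(p,q). -/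
/-!
With `G = Yᵀ Y` invertible, `Q = J Ỹᵀ Y G⁻¹ J` satisfies `Ỹ Q = (Ỹ J Ỹᵀ) Y G⁻¹ J = (Y J Yᵀ) Y G⁻¹ J = Y`
because `J² = 1`. Since `J` and `G⁻¹` are symmetric, likewise
`Qᵀ J Q = J G⁻¹ Yᵀ (Ỹ J Ỹᵀ) Y G⁻¹ J = J G⁻¹ G J G G⁻¹ J = J`.
-/

open Matrix

namespace Matrix

variable {m n R : Type*} [Fintype m] [Fintype n] [DecidableEq n] [CommRing R]

theorem diagonal_mul_self_eq_one {d : n → R} (hd : ∀ i, d i * d i = 1) :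
    diagonal d * diagonal d = 1 := by
  rw [diagonal_mul_diagonal, ← diagonal_one]
  exact congrArg diagonal (funext hd)

theorem IsSymm.nonsing_inv {A : Matrix n n R} (hA : A.IsSymm) : A⁻¹.IsSymm := by
  rw [IsSymm, transpose_nonsing_inv, hA.eq]

noncomputable def signatureAlignment (J : Matrix n n R) (Y Yt : Matrix m n R) : Matrix n n R :=
  J * (Ytᵀ * Y) * (Yᵀ * Y)⁻¹ * J

variable {J : Matrix n n R} {Y Yt : Matrix m n R}

theorem mul_signatureAlignment (hJ : J * J = 1) (hY : IsUnit (Yᵀ * Y))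
    (hEq : Y * J * Yᵀ = Yt * J * Ytᵀ) :
    Yt * signatureAlignment J Y Yt = Y := by
  calc Yt * signatureAlignment J Y Yt
      = Yt * J * Ytᵀ * Y * (Yᵀ * Y)⁻¹ * J := by simp only [signatureAlignment, Matrix.mul_assoc]
    _ = Y * J * ((Yᵀ * Y) * (Yᵀ * Y)⁻¹) * J := by rw [← hEq]; simp only [Matrix.mul_assoc]
    _ = Y := by
      rw [mul_nonsing_inv _ ((isUnit_iff_isUnit_det _).mp hY), Matrix.mul_one,
        Matrix.mul_assoc, hJ, Matrix.mul_one]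

theorem signatureAlignment_transpose_mul_mul_self (hJ : J * J = 1) (hJT : J.IsSymm)
    (hY : IsUnit (Yᵀ * Y)) (hEq : Y * J * Yᵀ = Yt * J * Ytᵀ) :
    (signatureAlignment J Y Yt)ᵀ * J * signatureAlignment J Y Yt = J := by
  set G := Yᵀ * Y with hG
  have hGdet : IsUnit G.det := (isUnit_iff_isUnit_det _).mp hY
  have hGsymm : G.IsSymm := by rw [hG, IsSymm, transpose_mul, transpose_transpose]
  have hJJJ : J * J * J = J := by rw [hJ, Matrix.one_mul]
  calc (signatureAlignment J Y Yt)ᵀ * J * signatureAlignment J Y Yt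
      = J * G⁻¹ * Yᵀ * (Yt * (J * J * J) * Ytᵀ) * Y * G⁻¹ * J := by
        simp only [signatureAlignment, transpose_mul, transpose_transpose, hJT.eq,
          Matrix.mul_assoc, ← hG, hGsymm.nonsing_inv.eq]
    _ = J * (G⁻¹ * G) * J * (G * G⁻¹) * J := by
        rw [hJJJ, ← hEq]; simp only [hG, Matrix.mul_assoc]
    _ = J := by
      rw [nonsing_inv_mul _ hGdet, mul_nonsing_inv _ hGdet, Matrix.mul_one, Matrix.mul_one, hJJJ]

end Matrix

theorem stmt_9_general (n p q : ℕ)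
    (Ipq : Matrix (Fin (p + q)) (Fin (p + q)) ℝ)
    (hI : Ipq = Matrix.diagonal (fun i : Fin (p + q) => if (i : ℕ) < p then (1 : ℝ) else -1))
    (Y Yt : Matrix (Fin n) (Fin (p + q)) ℝ)
    (hY : IsUnit (Yᵀ * Y))
    (hEq : Y * Ipq * Yᵀ = Yt * Ipq * Ytᵀ)
    (Q : Matrix (Fin (p + q)) (Fin (p + q)) ℝ)
    (hQ : Q = Ipq * (Ytᵀ * Y) * (Yᵀ * Y)⁻¹ * Ipq) :
    Y = Yt * Q ∧ Qᵀ * Ipq * Q = Ipq := by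
  have hI2 : Ipq * Ipq = 1 := by
    rw [hI]
    exact diagonal_mul_self_eq_one fun i => by split_ifs <;> norm_num
  have hIT : Ipq.IsSymm := by rw [hI]; exact isSymm_diagonal _
  rw [hQ]
  exact ⟨(mul_signatureAlignment hI2 hY hEq).symm,
    signatureAlignment_transpose_mul_mul_self hI2 hIT hY hEq⟩

theorem stmt_9 (n p q : ℕ)
    (Ipq : Matrix (Fin (p + q)) (Fin (p + q)) ℝ)
    (hI : Ipq = Matrix.diagonal (fun i : Fin (p + q) => if (i : ℕ) < p then (1 : ℝ) else -1))
    (Y Yt : Matrix (Fin n) (Fin (p + q)) ℝ)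
    (hY : IsUnit (Yᵀ * Y)) (hYt : IsUnit (Ytᵀ * Yt))
    (hEq : Y * Ipq * Yᵀ = Yt * Ipq * Ytᵀ)
    (Q : Matrix (Fin (p + q)) (Fin (p + q)) ℝ)
    (hQ : Q = Ipq * (Ytᵀ * Y) * (Yᵀ * Y)⁻¹ * Ipq) :
    Y = Yt * Q ∧ Qᵀ * Ipq * Q = Ipq :=
  stmt_9_general n p q Ipq hI Y Yt hY hEq Q hQ
end
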